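/- arXiv:2310.00493 — 3 statements merged into one kernel-verified Lean document; each statement's English description precedes it below -/
import Mathlib

section
/- For any reflexive graphs X and X', the inclusion of the edge subcategory (ŷ × ŷ ↓ (X, X'))_{(E,E)} — the full subcategory of the comma category (ŷ × ŷ) ↓ (X, X') spanned by the objects of the form ((E,E), (f, f') : (ŷ(E), ŷ(E)) → (X, X')) — into (ŷ × ŷ) ↓ (X, X') is a final functor. -/
open CategoryTheory MonoidalCategory

/-- The category of (reflexive) graphs: an object is a set of vertices with an
irreflexive symmetric adjacency relation. -/
structure GraphCat : Type 1 where
  V : Type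
  adj : V → V → Prop
  symm : ∀ {v w : V}, adj v w → adj w v
  loopless : ∀ v : V, ¬ adj v v

namespace GraphCat

/-- A graph map: whenever `v ∼ w`, either `f v = f w` or `f v ∼ f w`. -/
structure Hom (X Y : GraphCat) where
  toFun : X.V → Y.V
  map_adj : ∀ {v w : X.V}, X.adj v w → toFun v = toFun w ∨ Y.adj (toFun v) (toFun w)

theorem Hom.ext' {X Y : GraphCat} {f g : Hom X Y} (h : f.toFun = g.toFun) : f = g := by
  cases f; cases g; cases h; rfl

instance : Category GraphCat where
  Hom := Hom
  id X := ⟨fun v => v, fun h => Or.inr h⟩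
  comp f g := ⟨fun v => g.toFun (f.toFun v), fun {v w} h => by
    rcases f.map_adj h with h' | h'
    · exact Or.inl (congrArg g.toFun h')
    · exact g.map_adj h'⟩
  id_comp f := Hom.ext' rfl
  comp_id f := Hom.ext' rfl
  assoc f g h := Hom.ext' rfl

/-- The one-vertex graph `I₀`. -/
def I0 : GraphCat := ⟨PUnit, fun _ _ => False, fun h => h, fun _ h => h⟩

/-- The graph `I₁` with two vertices `s = false` and `t = true` joined by an edge. -/
def I1 : GraphCat := ⟨Bool, fun v w => v ≠ w, Ne.symm, fun _ h => h rfl⟩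

end GraphCat

open GraphCat

/-- The two objects of the category `𝔾`. -/
inductive GObj : Type
  | V : GObj
  | E : GObj

/-- The underlying sets realizing `𝔾` concretely: `V ↦ PUnit` and `E ↦ Bool`. -/
def GFib : GObj → Type
  | .V => PUnit
  | .E => Bool

/-- The category `𝔾`, generated by `s, t : V → E`, `r : E → V`, `σ : E → E` subject to
`r∘s = r∘t = id`, `σ² = id`, `σ∘s = t`, `σ∘t = s`, `r∘σ = r`; realized concretely as the
full subcategory of `Set` spanned by a one-element set (for `V`) and a two-element set
(for `E`), which satisfies exactly these generators and relations. -/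
instance : Category GObj where
  Hom a b := GFib a → GFib b
  id a := fun x => x
  comp f g := fun x => g (f x)
  id_comp _ := rfl
  comp_id _ := rfl
  assoc _ _ _ := rfl

/-- The factorization `ŷ : 𝔾 ⥤ Graph` of the Yoneda embedding through graphs, sending
`V` to `I₀` and `E` to `I₁`. -/
def yHat : GObj ⥤ GraphCat where
  obj a := match a with
    | .V => I0
    | .E => I1
  map {a b} f := match a, b, f with
    | .V, .V, f => ⟨f, fun {_ _} h => h.elim⟩
    | .V, .E, f => ⟨f, fun {_ _} h => h.elim⟩
    | .E, .V, f => ⟨f, fun {_ _} _ => Or.inl rfl⟩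
    | .E, .E, f => ⟨f, fun {v w} _ => eq_or_ne (f v) (f w)⟩
  map_id := by rintro (_ | _) <;> rfl
  map_comp := by rintro (_ | _) (_ | _) (_ | _) f g <;> rfl

/-!
`V` is a retract of `E` in `𝔾` (via `s` and `r`), so every object of `(ŷ × ŷ) ↓ (X, X')` is a
retract of an edge object. If `d` is a retract `d ⟶ c ⟶ d` of an object `c` of a full
subcategory, then `i : d ⟶ c` is weakly initial in `d ↓ ι`, since every `f : d ⟶ c'` factors as
`i ≫ (r ≫ f)`; hence `d ↓ ι` is connected.
-/

namespace CategoryTheory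

lemma isConnected_of_nonempty_hom_from {J : Type*} [Category* J] (x : J)
    (h : ∀ j : J, Nonempty (x ⟶ j)) : IsConnected J := by
  have : Nonempty J := ⟨x⟩
  refine isConnected_of_zigzag fun j₁ j₂ => ⟨[x, j₂], ?_, rfl⟩
  obtain ⟨f₁⟩ := h j₁
  obtain ⟨f₂⟩ := h j₂
  simp only [List.isChain_cons_cons, List.isChain_singleton, and_true]
  exact ⟨Zag.symm (Zag.of_hom f₁), Zag.of_hom f₂⟩

lemma ObjectProperty.final_ι_of_forall_retract {C : Type*} [Category* C] (P : ObjectProperty C)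
    (h : ∀ X : C, ∃ Y, P Y ∧ Nonempty (Retract X Y)) : P.ι.Final where
  out X := by
    obtain ⟨Y, hY, ⟨e⟩⟩ := h X
    exact isConnected_of_nonempty_hom_from
      (StructuredArrow.mk (Y := (⟨Y, hY⟩ : P.FullSubcategory)) e.i) fun j =>
        ⟨StructuredArrow.homMk (ObjectProperty.homMk (e.r ≫ j.hom)) (by simp)⟩

namespace Retract

variable {C C' : Type*} [Category* C] [Category* C']

def prod {X Y : C} {X' Y' : C'} (h : Retract X Y) (h' : Retract X' Y') :
    Retract (X, X') (Y, Y') where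
  i := (h.i, h'.i)
  r := (h.r, h'.r)

def costructuredArrowMk {F : C ⥤ C'} {Z : C'} {X Y : C} (h : Retract X Y) (f : F.obj X ⟶ Z) :
    Retract (CostructuredArrow.mk f) (CostructuredArrow.mk (F.map h.r ≫ f)) where
  i := CostructuredArrow.homMk h.i (by simp [← F.map_comp_assoc])
  r := CostructuredArrow.homMk h.r

end Retract

end CategoryTheory

def GObj.retractE : (a : GObj) → Retract a GObj.E
  | .V => ⟨fun _ => false, fun _ => PUnit.unit, rfl⟩
  | .E => Retract.refl _

/-- For any (reflexive) graphs `X`, `X'`, the inclusion of the edge subcategory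
`(ŷ × ŷ ↓ (X, X'))_{(E,E)}` — the full subcategory of the comma category
`(ŷ × ŷ) ↓ (X, X')` spanned by the objects of the form
`((E,E), (f, f') : (ŷ(E), ŷ(E)) ⟶ (X, X'))` — into `(ŷ × ŷ) ↓ (X, X')` is a final
functor. -/
theorem edge_subcategory_prod_final (X X' : GraphCat) :
    (ObjectProperty.ι
      (fun c : CostructuredArrow (yHat.prod yHat) (X, X') =>
        c.left = (GObj.E, GObj.E))).Final :=
  ObjectProperty.final_ι_of_forall_retract _ fun c =>
    ⟨_, rfl, ⟨((GObj.retractE _).prod (GObj.retractE _)).costructuredArrowMk c.hom⟩⟩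
end

section
/- Let ⊗ be the tensor product of a monoidal structure on Graph with unit I_0, and for a, a' ∈ {s, t} let (a,a') : I_0 → I_1 ⊗ I_1 denote the composite of the unit isomorphism I_0 ≅ I_0 ⊗ I_0 with a ⊗ a'. If some vertex of I_1 ⊗ I_1 carries more than one label, i.e., two of the four morphisms (s,s), (s,t), (t,s), (t,t) are equal, then either (s,s) = (t,s) and (s,t) = (t,t), or (s,s) = (s,t) and (t,s) = (t,t), or both. -/
open CategoryTheory MonoidalCategory

namespace GraphCat

/-- The vertex inclusions `s, t : I₀ ⟶ I₁` (`s` for `false`, `t` for `true`). -/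
def vert (b : Bool) : I0 ⟶ I1 := ⟨fun _ => b, fun {_ _} h => h.elim⟩

section Labels

variable [MonoidalCategory GraphCat]

/-- Given a monoidal structure on graphs with unit `I₀`, the label morphism
`(a, a') : I₀ ⟶ I₁ ⊗ I₁` for `a, a' ∈ {s, t}` (encoded as booleans, `s = false`,
`t = true`): the composite of the unit isomorphism `I₀ ≅ I₀ ⊗ I₀` with `a ⊗ a'`. -/
def lab (hU : (𝟙_ GraphCat) = I0) (a a' : Bool) : I0 ⟶ (I1 ⊗ I1 : GraphCat) :=
  eqToHom hU.symm ≫ (λ_ (𝟙_ GraphCat)).inv ≫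
    ((eqToHom hU ≫ vert a) ⊗ₘ (eqToHom hU ≫ vert a'))

/-- The vertex of `I₁ ⊗ I₁` labelled `(a, a')`, i.e. the image of the morphism
`lab hU a a'`. -/
def vlab (hU : (𝟙_ GraphCat) = I0) (a a' : Bool) : (I1 ⊗ I1 : GraphCat).V :=
  (lab hU a a').toFun PUnit.unit

end Labels

end GraphCat

open GraphCat

/-!
Bifunctoriality of `⊗` gives `(a, a') ≫ (f ⊗ g) = (f a, g a')` for endomorphisms `f, g` of `I₁`.
If `(a, c) = (b, d)` with `a ≠ b`, postcomposing with `𝟙 ⊗ const e` gives `(a, e) = (b, e)` for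
both `e`, i.e. the first row of the conclusion; if `a = b`, then `c ≠ d` and `const e ⊗ 𝟙` gives
the second.
-/

namespace GraphCat

def I1.const (b : Bool) : I1 ⟶ I1 := ⟨fun _ => b, fun _ => Or.inl rfl⟩

lemma vert_comp (f : I1 ⟶ I1) (a : Bool) : vert a ≫ f = vert (f.toFun a) :=
  Hom.ext' rfl

section Labels

variable [MonoidalCategory GraphCat] (hU : (𝟙_ GraphCat) = I0)

lemma lab_comp_tensorHom (a a' : Bool) (f g : I1 ⟶ I1) :
    lab hU a a' ≫ (f ⊗ₘ g) = lab hU (f.toFun a) (g.toFun a') := by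
  simp only [lab, Category.assoc, tensorHom_comp_tensorHom, vert_comp]

variable {hU}

lemma lab_eq_lab_of_fst_ne {a b c d : Bool} (h : lab hU a c = lab hU b d) (hab : a ≠ b)
    (e : Bool) : lab hU false e = lab hU true e := by
  have hae : lab hU a e = lab hU b e := by
    have := congrArg (· ≫ (𝟙 I1 ⊗ₘ I1.const e)) h
    rwa [lab_comp_tensorHom, lab_comp_tensorHom] at this
  cases a <;> cases b <;> first | exact absurd rfl hab | exact hae | exact hae.symm

lemma lab_eq_lab_of_snd_ne {a b c d : Bool} (h : lab hU a c = lab hU b d) (hcd : c ≠ d)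
    (e : Bool) : lab hU e false = lab hU e true := by
  have hce : lab hU e c = lab hU e d := by
    have := congrArg (· ≫ (I1.const e ⊗ₘ 𝟙 I1)) h
    rwa [lab_comp_tensorHom, lab_comp_tensorHom] at this
  cases c <;> cases d <;> first | exact absurd rfl hcd | exact hce | exact hce.symm

end Labels

end GraphCat

/-- Let `⊗` be the tensor product of a monoidal structure on graphs with unit `I₀`.
If some vertex of `I₁ ⊗ I₁` carries more than one label, i.e. two of the four
morphisms `(s,s), (s,t), (t,s), (t,t) : I₀ ⟶ I₁ ⊗ I₁` are equal, then either
`(s,s) = (t,s)` and `(s,t) = (t,t)`, or `(s,s) = (s,t)` and `(t,s) = (t,t)`,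
or both.  (Here `s = false` and `t = true`.) -/
theorem double_label [MonoidalCategory GraphCat] (hU : (𝟙_ GraphCat) = I0)
    (h : ∃ p q : Bool × Bool, p ≠ q ∧ lab hU p.1 p.2 = lab hU q.1 q.2) :
    (lab hU false false = lab hU true false ∧ lab hU false true = lab hU true true) ∨
    (lab hU false false = lab hU false true ∧ lab hU true false = lab hU true true) := by
  obtain ⟨⟨a, c⟩, ⟨b, d⟩, hne, heq⟩ := h
  by_cases hab : a = b
  · have hcd : c ≠ d := fun hcd => hne (by rw [hab, hcd])
    exact Or.inr ⟨lab_eq_lab_of_snd_ne heq hcd false, lab_eq_lab_of_snd_ne heq hcd true⟩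
  · exact Or.inl ⟨lab_eq_lab_of_fst_ne heq hab false, lab_eq_lab_of_fst_ne heq hab true⟩
end

section
/- Let ⊗ be the tensor product of a closed symmetric monoidal structure on the category Graph of reflexive graphs, and for a, a' ∈ {s, t} write (a,a') also for the vertex of I_1 ⊗ I_1 that is the image of the morphism (a,a') : I_0 → I_1 ⊗ I_1. Then any two of the four labelled vertices that agree in either coordinate are adjacent in I_1 ⊗ I_1: for each a ∈ {s,t}, (a,s) ∼ (a,t) and (s,a) ∼ (t,a). -/
open CategoryTheory MonoidalCategory

open GraphCat

/-! The vertex `(a, b)` of `I₁ ⊗ I₁` is the image of `b` under the graph map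
`λ⁻¹ ≫ (a ▷ I₁) : I₁ ⟶ I₁ ⊗ I₁`, and also the image of `a` under `ρ⁻¹ ≫ (I₁ ◁ b)`.
Since the unit `I₀` is terminal, `a : I₀ ⟶ I₁` has a retraction, so these maps are split
monomorphisms, hence injective on vertices; an injective graph map cannot collapse the edge
`s ∼ t`, so it sends it to an edge. -/

section Whiskering

variable {C : Type*} [Category C] [MonoidalCategory C]

instance isSplitMono_whiskerRight {X X' : C} (f : X ⟶ X') [IsSplitMono f] (Y : C) :
    IsSplitMono (f ▷ Y) :=
  inferInstanceAs (IsSplitMono ((tensorRight Y).map f))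

instance isSplitMono_whiskerLeft (X : C) {Y Y' : C} (g : Y ⟶ Y') [IsSplitMono g] :
    IsSplitMono (X ◁ g) :=
  inferInstanceAs (IsSplitMono ((tensorLeft X).map g))

end Whiskering

namespace GraphCat

theorem Hom.injective_of_isSplitMono {X Y : GraphCat} (f : X ⟶ Y) [IsSplitMono f] :
    Function.Injective f.toFun :=
  Function.LeftInverse.injective (g := (retraction f).toFun)
    fun v => congrArg (fun h : X ⟶ X => h.toFun v) (IsSplitMono.id f)

theorem Hom.adj_of_injective {X Y : GraphCat} (f : X ⟶ Y) (hf : Function.Injective f.toFun)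
    {v w : X.V} (h : X.adj v w) : Y.adj (f.toFun v) (f.toFun w) :=
  (f.map_adj h).resolve_left <| hf.ne fun hvw => X.loopless v (hvw ▸ h)

theorem Hom.adj_of_isSplitMono {X Y : GraphCat} (f : X ⟶ Y) [IsSplitMono f]
    {v w : X.V} (h : X.adj v w) : Y.adj (f.toFun v) (f.toFun w) :=
  f.adj_of_injective f.injective_of_isSplitMono h

def isTerminalI0 : Limits.IsTerminal I0 :=
  Limits.IsTerminal.ofUniqueHom (fun _ => ⟨fun _ => PUnit.unit, fun _ => Or.inl rfl⟩)
    fun _ _ => Hom.ext' rfl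

theorem I1_adj_false_true : I1.adj false true := Bool.false_ne_true

section Labels

variable [MonoidalCategory GraphCat] (hU : (𝟙_ GraphCat) = I0)

instance isSplitMono_eqToHom_comp_vert (a : Bool) : IsSplitMono (eqToHom hU ≫ vert a) :=
  (isTerminalI0.ofIso (eqToIso hU.symm)).isSplitMono_from _

theorem lab_eq_vert_comp_leftUnitor_inv_comp_whiskerRight (a b : Bool) :
    lab hU a b = vert b ≫ (λ_ I1).inv ≫ (eqToHom hU ≫ vert a) ▷ I1 := by
  simp only [lab, leftUnitor_inv_comp_tensorHom, Category.assoc, eqToHom_trans_assoc,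
    eqToHom_refl, Category.id_comp]

theorem lab_eq_vert_comp_rightUnitor_inv_comp_whiskerLeft (a b : Bool) :
    lab hU a b = vert a ≫ (ρ_ I1).inv ≫ I1 ◁ (eqToHom hU ≫ vert b) := by
  simp only [lab, unitors_inv_equal, rightUnitor_inv_comp_tensorHom, Category.assoc,
    eqToHom_trans_assoc, eqToHom_refl, Category.id_comp]

end Labels

end GraphCat

theorem labelled_vertices_adjacent_general [MonoidalCategory GraphCat] (hU : (𝟙_ GraphCat) = I0) :
    ∀ a : Bool,
      (I1 ⊗ I1 : GraphCat).adj (vlab hU a false) (vlab hU a true) ∧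
      (I1 ⊗ I1 : GraphCat).adj (vlab hU false a) (vlab hU true a) := by
  intro a
  constructor
  · rw [vlab, vlab, lab_eq_vert_comp_leftUnitor_inv_comp_whiskerRight,
      lab_eq_vert_comp_leftUnitor_inv_comp_whiskerRight]
    exact Hom.adj_of_isSplitMono ((λ_ I1).inv ≫ (eqToHom hU ≫ vert a) ▷ I1) I1_adj_false_true
  · rw [vlab, vlab, lab_eq_vert_comp_rightUnitor_inv_comp_whiskerLeft,
      lab_eq_vert_comp_rightUnitor_inv_comp_whiskerLeft]
    exact Hom.adj_of_isSplitMono ((ρ_ I1).inv ≫ I1 ◁ (eqToHom hU ≫ vert a)) I1_adj_false_true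

/-- Let `⊗` be the tensor product of a closed symmetric monoidal structure on the
category of (reflexive) graphs (whose unit is necessarily `I₀`), and write `(a,a')`
for the vertex of `I₁ ⊗ I₁` labelled `(a,a')`.  Then any two of the four labelled
vertices that agree in either coordinate are adjacent in `I₁ ⊗ I₁`: for each
`a ∈ {s,t}`, `(a,s) ∼ (a,t)` and `(s,a) ∼ (t,a)`.  (Here `s = false`, `t = true`.) -/
theorem labelled_vertices_adjacent [MonoidalCategory GraphCat] [SymmetricCategory GraphCat]
    [MonoidalClosed GraphCat] (hU : (𝟙_ GraphCat) = I0) :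
    ∀ a : Bool,
      (I1 ⊗ I1 : GraphCat).adj (vlab hU a false) (vlab hU a true) ∧
      (I1 ⊗ I1 : GraphCat).adj (vlab hU false a) (vlab hU true a) :=
  labelled_vertices_adjacent_general hU
end
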